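/- Let P : E ⥤ B be an isofibration of categories, let P' : E' ⥤ B be a functor, and let f : E ⥤ E' be an equivalence of categories with f ⋙ P' = P. Then f extends to an equivalence over B: there exist a functor g : E' ⥤ E with g ⋙ P = P' and natural isomorphisms α : f ⋙ g ≅ 𝟭_E and β : g ⋙ f ≅ 𝟭_{E'} such that P maps every component of α to an identity morphism and P' maps every component of β to an identity morphism. -/

import Mathlib

/-!
Lift the counit `ε : f⁻¹ ⋙ f ≅ 𝟭` along the isofibration: for each `e'` the isomorphism
`P (f⁻¹ e') = P' (f f⁻¹ e') ≅ P' e'` given by `P' ε` lifts to `v : f⁻¹ e' ≅ g e'` with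
`P (g e') = P' e'`. Replacing the inverse `f⁻¹` by the isomorphic functor `g` changes the counit
to `f v⁻¹ ≫ ε`, which `P'` sends to an identity, and this forces `g ⋙ P = P'`. The triangle
identity `f η⁻¹ = ε f` then makes the unit vertical too.
-/

open CategoryTheory

/-- A functor `P` is an isofibration if every isomorphism out of the image of an object
lifts to an isomorphism with prescribed domain. -/
def IsIsofibration {X Y : Type*} [Category X] [Category Y] (P : X ⥤ Y) : Prop :=
  ∀ (x : X) (b : Y) (u : P.obj x ≅ b),
    ∃ (y : X) (v : x ≅ y) (h : P.obj y = b), P.mapIso v = u ≪≫ eqToIso h.symm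

namespace CategoryTheory.Functor

variable {C D : Type*} [Category C] [Category D]

def IsVertical (P : C ⥤ D) {a b : C} (φ : a ⟶ b) : Prop :=
  ∃ h : P.obj a = P.obj b, P.map φ = eqToHom h

lemma eq_of_isVertical {X : Type*} [Category X] {G H : X ⥤ C} {Q : C ⥤ D} (β : G ≅ H)
    (hβ : ∀ x, Q.IsVertical (β.hom.app x)) : G ⋙ Q = H ⋙ Q :=
  ext_of_iso (isoWhiskerRight β Q) (fun x => (hβ x).1) (fun x => (hβ x).2)

variable {E : Type*} [Category E] {P : E ⥤ D} {P' : C ⥤ D} {f : E ⥤ C}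

lemma isVertical_of_isVertical_map (hfP : f ⋙ P' = P) {a b : E} {φ : a ⟶ b}
    (hφ : P'.IsVertical (f.map φ)) : P.IsVertical φ := by
  obtain ⟨h, hφ⟩ := hφ
  refine ⟨(congr_obj hfP a).symm.trans (h.trans (congr_obj hfP b)), ?_⟩
  simp [congr_hom hfP.symm φ, hφ]

lemma exists_iso_isVertical_map_inv_comp (hP : IsIsofibration P) (hfP : f ⋙ P' = P) (x : E)
    {c : C} (w : f.obj x ≅ c) : ∃ (y : E) (v : x ≅ y), P'.IsVertical (f.map v.inv ≫ w.hom) := by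
  obtain ⟨y, v, h, hv⟩ := hP x (P'.obj c) (eqToIso (congr_obj hfP x).symm ≪≫ P'.mapIso w)
  refine ⟨y, v, (congr_obj hfP y).trans h, ?_⟩
  have hvinv : P.map v.inv = eqToHom h ≫ P'.map w.inv ≫ eqToHom (congr_obj hfP x) := by
    simpa using congrArg Iso.inv hv
  have hfv := congr_hom hfP v.inv
  simp only [comp_map, hvinv] at hfv
  simp [hfv, ← P'.map_comp]

end CategoryTheory.Functor

/-- An equivalence `f` over `B` out of an isofibration extends to an equivalence over
`B`. -/
theorem isofibration_equiv_extends_over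
    {E E' B : Type*} [Category E] [Category E'] [Category B]
    (P : E ⥤ B) (P' : E' ⥤ B) (hP : IsIsofibration P)
    (f : E ⥤ E') (hf : f.IsEquivalence) (hfP : f ⋙ P' = P) :
    ∃ (g : E' ⥤ E) (_ : g ⋙ P = P') (α : f ⋙ g ≅ 𝟭 E) (β : g ⋙ f ≅ 𝟭 E'),
      (∀ e : E, ∃ h : P.obj ((f ⋙ g).obj e) = P.obj e,
        P.map (α.hom.app e) = eqToHom h) ∧
      (∀ e' : E', ∃ h : P'.obj ((g ⋙ f).obj e') = P'.obj e',
        P'.map (β.hom.app e') = eqToHom h) := by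
  choose y v hv using fun e' =>
    Functor.exists_iso_isVertical_map_inv_comp hP hfP _ (f.asEquivalence.counitIso.app e')
  let e := f.asEquivalence.changeInverse (f.inv.isoCopyObj y v)
  have hβ : ∀ e', P'.IsVertical (e.counitIso.hom.app e') := hv
  have hα : ∀ x, P.IsVertical (e.unitIso.symm.hom.app x) := fun x =>
    Functor.isVertical_of_isVertical_map hfP (by
      have triangle : f.map (e.unitIso.symm.hom.app x) = e.counitIso.hom.app (f.obj x) :=
        (e.counit_app_functor x).symm
      exact triangle ▸ hβ (f.obj x))
  refine ⟨e.inverse, ?_, e.unitIso.symm, e.counitIso, hα, hβ⟩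
  calc e.inverse ⋙ P = e.inverse ⋙ e.functor ⋙ P' := by rw [← hfP]; rfl
    _ = 𝟭 E' ⋙ P' := Functor.eq_of_isVertical e.counitIso hβ
    _ = P' := Functor.id_comp P'
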